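/- For every induced subdigraph H of a digraph D, dac(H) ≤ dac(D). -/

import Mathlib

/-- The subset `S` of vertices induces an acyclic subdigraph of the digraph with
arc relation `A` (i.e. there is no directed cycle all of whose vertices lie in `S`). -/
def AcyclicSet {V : Type*} (A : V → V → Prop) (S : Set V) : Prop :=
  ∀ v : V, ¬ Relation.TransGen (fun x y => x ∈ S ∧ y ∈ S ∧ A x y) v v

/-- `c` is an acyclic vertex coloring of the digraph `A` with `k` colors:
`c` is surjective and every chromatic class induces an acyclic subdigraph. -/
def IsAcyclicColoring {V : Type*} (A : V → V → Prop) {k : ℕ} (c : V → Fin k) : Prop :=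
  Function.Surjective c ∧ ∀ i : Fin k, AcyclicSet A {v | c v = i}

/-- `c` is a complete vertex coloring of the digraph `A` with `k` colors:
`c` is surjective and for every ordered pair of distinct colors `(i, j)` there is
an arc `(u, v)` with `c u = i` and `c v = j`. -/
def IsCompleteColoring {V : Type*} (A : V → V → Prop) {k : ℕ} (c : V → Fin k) : Prop :=
  Function.Surjective c ∧
    ∀ i j : Fin k, i ≠ j → ∃ u v : V, A u v ∧ c u = i ∧ c v = j

/-- The diachromatic number: the largest `k` admitting a complete acyclic `k`-coloring. -/
noncomputable def dac {V : Type*} (A : V → V → Prop) : ℕ :=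
  sSup {k | ∃ c : V → Fin k, IsAcyclicColoring A c ∧ IsCompleteColoring A c}

/-- The dichromatic number: the smallest `k` admitting an acyclic `k`-coloring. -/
noncomputable def dc {V : Type*} (A : V → V → Prop) : ℕ :=
  sInf {k | ∃ c : V → Fin k, IsAcyclicColoring A c}

/-- The pseudoachromatic number: the largest `k` admitting a complete `k`-coloring. -/
noncomputable def psi {V : Type*} (A : V → V → Prop) : ℕ :=
  sSup {k | ∃ c : V → Fin k, IsCompleteColoring A c}

/-- `A` is a tournament: no loops, and for distinct vertices exactly one of the
two possible arcs is present. -/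
def IsTournament {V : Type*} (A : V → V → Prop) : Prop :=
  (∀ v : V, ¬ A v v) ∧ ∀ u v : V, u ≠ v → (A u v ↔ ¬ A v u)

/-!
A complete acyclic coloring of the induced subdigraph is extended to `D` one vertex at a time.
A new vertex `u` either joins some class that stays acyclic, or each class together with `u`
carries a directed cycle; such a cycle passes through `u`, so `u` has arcs to and from every
class and can form a new class of its own (acyclic because `D` has no loops). Completeness is
preserved in both cases and the number of colors never decreases.
-/

open Relation Function

section

variable {V : Type*} {A : V → V → Prop}

theorem Relation.TransGen.avoiding_or_through {r : V → V → Prop} (u : V) {a b : V}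
    (h : TransGen r a b) :
    TransGen (fun x y => r x y ∧ x ≠ u ∧ y ≠ u) a b ∨
      ReflTransGen r a u ∧ ReflTransGen r u b := by
  induction h with
  | @single b h =>
    by_cases ha : a = u
    · exact .inr ⟨ha ▸ .refl, .single (ha ▸ h)⟩
    by_cases hb : b = u
    · exact .inr ⟨hb ▸ .single h, hb ▸ .refl⟩
    exact .inl (.single ⟨h, ha, hb⟩)
  | @tail b c hab hbc ih =>
    rcases ih with ih | ⟨hau, hub⟩
    · by_cases hb : b = u
      · exact .inr ⟨hb ▸ hab.to_reflTransGen, .single (hb ▸ hbc)⟩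
      by_cases hc : c = u
      · exact .inr ⟨hc ▸ (hab.tail hbc).to_reflTransGen, hc ▸ .refl⟩
      exact .inl (ih.tail ⟨hbc, hb, hc⟩)
    · exact .inr ⟨hau, hub.tail hbc⟩

theorem AcyclicSet.mono {C C' : Set V} (hC : AcyclicSet A C) (h : C' ⊆ C) : AcyclicSet A C' :=
  fun v hv => hC v (TransGen.mono (fun _ _ hxy => ⟨h hxy.1, h hxy.2.1, hxy.2.2⟩) _ _ hv)

theorem acyclicSet_singleton {u : V} (hu : ¬ A u u) : AcyclicSet A {u} := by
  intro v hv
  obtain ⟨w, ⟨rfl, rfl, h⟩, -⟩ := TransGen.head'_iff.mp hv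
  exact hu h

theorem AcyclicSet.of_subtype {S C : Set V} (hCS : C ⊆ S)
    (h : AcyclicSet (fun x y : S => A x y) {x | x.1 ∈ C}) : AcyclicSet A C := by
  suffices ∀ {a b}, TransGen (fun x y => x ∈ C ∧ y ∈ C ∧ A x y) a b → ∃ (ha : a ∈ S) (hb : b ∈ S),
      TransGen (fun x y : S => x.1 ∈ C ∧ y.1 ∈ C ∧ A x y) ⟨a, ha⟩ ⟨b, hb⟩ by
    intro v hv
    obtain ⟨_, _, hv⟩ := this hv
    exact h _ hv
  intro a b hab
  induction hab with
  | single h => exact ⟨hCS h.1, hCS h.2.1, .single h⟩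
  | tail _ h ih =>
    obtain ⟨ha, _, hpath⟩ := ih
    exact ⟨ha, hCS h.2.1, hpath.tail h⟩

theorem AcyclicSet.exists_arcs_of_not_insert {C : Set V} {u : V} (hu : ¬ A u u)
    (hC : AcyclicSet A C) (h : ¬ AcyclicSet A (insert u C)) :
    (∃ w ∈ C, A u w) ∧ ∃ z ∈ C, A z u := by
  obtain ⟨v, hv⟩ : ∃ v, TransGen (fun x y => x ∈ insert u C ∧ y ∈ insert u C ∧ A x y) v v := by
    simpa [AcyclicSet] using h
  have hloop : TransGen (fun x y => x ∈ insert u C ∧ y ∈ insert u C ∧ A x y) u u := by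
    rcases hv.avoiding_or_through u with hv' | ⟨hvu, huv⟩
    · refine absurd (TransGen.mono (fun x y hxy => ?_) _ _ hv') (hC v)
      obtain ⟨⟨hx, hy, hxy⟩, hxu, hyu⟩ := hxy
      exact ⟨hx.resolve_left hxu, hy.resolve_left hyu, hxy⟩
    · exact (TransGen.trans_right huv hv).trans_left hvu
  obtain ⟨w, ⟨-, hw, huw⟩, -⟩ := TransGen.head'_iff.mp hloop
  obtain ⟨z, -, hz, -, hzu⟩ := TransGen.tail'_iff.mp hloop
  exact ⟨⟨w, hw.resolve_left fun h => hu (h ▸ huw), huw⟩,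
    ⟨z, hz.resolve_left fun h => hu (h ▸ hzu), hzu⟩⟩

/-- Colorings of the subdigraph induced by `T`, encoded as functions on all of `V` so that
enlarging `T` does not change their type. -/
structure IsCompleteAcyclicColoringOn (A : V → V → Prop) (T : Set V) {m : ℕ} (c : V → Fin m) :
    Prop where
  surjOn : ∀ i, ∃ v ∈ T, c v = i
  acyclic : ∀ i, AcyclicSet A {v ∈ T | c v = i}
  complete : ∀ i j, i ≠ j → ∃ x ∈ T, ∃ y ∈ T, A x y ∧ c x = i ∧ c y = j

namespace IsCompleteAcyclicColoringOn

variable {T : Set V} {m : ℕ} {c : V → Fin m} {u : V}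

theorem of_induced {S : Set V} {k : ℕ} {c₀ : S → Fin k}
    (hac : IsAcyclicColoring (fun x y : S => A x y) c₀)
    (hco : IsCompleteColoring (fun x y : S => A x y) c₀) (d : Fin k) :
    IsCompleteAcyclicColoringOn A S (extend Subtype.val c₀ fun _ => d) where
  surjOn i := by
    obtain ⟨x, rfl⟩ := hac.1 i
    exact ⟨x, x.2, Subtype.val_injective.extend_apply _ _ _⟩
  acyclic i := by
    refine AcyclicSet.of_subtype (fun _ hv => hv.1) ((hac.2 i).mono fun x hx => ?_)
    simpa [Subtype.val_injective.extend_apply] using hx.2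
  complete i j hij := by
    obtain ⟨x, y, hxy, rfl, rfl⟩ := hco.2 i j hij
    exact ⟨x, x.2, y, y.2, hxy, Subtype.val_injective.extend_apply _ _ _,
      Subtype.val_injective.extend_apply _ _ _⟩

theorem update [DecidableEq V] (hc : IsCompleteAcyclicColoringOn A T c) (hu : u ∉ T) {i : Fin m}
    (hi : AcyclicSet A (insert u {v ∈ T | c v = i})) :
    IsCompleteAcyclicColoringOn A (insert u T) (update c u i) where
  surjOn j := by
    obtain ⟨v, hv, rfl⟩ := hc.surjOn j
    exact ⟨v, .inr hv, update_of_ne (ne_of_mem_of_not_mem hv hu) _ _⟩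
  acyclic j := by
    rcases eq_or_ne j i with rfl | hji
    · refine hi.mono fun v ⟨hv, hvj⟩ => ?_
      rcases eq_or_ne v u with rfl | hvu
      · exact .inl rfl
      · exact .inr ⟨hv.resolve_left hvu, by rwa [update_of_ne hvu] at hvj⟩
    · refine (hc.acyclic j).mono fun v ⟨hv, hvj⟩ => ?_
      have hvu : v ≠ u := by rintro rfl; exact hji (by simpa using hvj.symm)
      exact ⟨hv.resolve_left hvu, by rwa [update_of_ne hvu] at hvj⟩
  complete j j' hjj' := by
    obtain ⟨x, hx, y, hy, hxy, rfl, rfl⟩ := hc.complete j j' hjj'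
    exact ⟨x, .inr hx, y, .inr hy, hxy, update_of_ne (ne_of_mem_of_not_mem hx hu) _ _,
      update_of_ne (ne_of_mem_of_not_mem hy hu) _ _⟩

theorem update_last [DecidableEq V] (hc : IsCompleteAcyclicColoringOn A T c) (hu : u ∉ T)
    (huu : ¬ A u u)
    (harcs : ∀ i, (∃ w ∈ {v ∈ T | c v = i}, A u w) ∧ ∃ z ∈ {v ∈ T | c v = i}, A z u) :
    IsCompleteAcyclicColoringOn A (insert u T)
      (Function.update (Fin.castSucc ∘ c) u (Fin.last m)) := by
  have hval : ∀ v ∈ T, Function.update (Fin.castSucc ∘ c) u (Fin.last m) v = (c v).castSucc :=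
    fun v hv => update_of_ne (ne_of_mem_of_not_mem hv hu) _ _
  refine ⟨fun j => ?_, fun j => ?_, fun p q hpq => ?_⟩
  · induction j using Fin.lastCases with
    | last => exact ⟨u, .inl rfl, update_self _ _ _⟩
    | cast i =>
      obtain ⟨v, hv, rfl⟩ := hc.surjOn i
      exact ⟨v, .inr hv, hval v hv⟩
  · induction j using Fin.lastCases with
    | last =>
      refine (acyclicSet_singleton huu).mono fun v ⟨hv, hvj⟩ => ?_
      by_contra hvu
      rw [update_of_ne hvu] at hvj
      exact (Fin.castSucc_lt_last _).ne hvj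
    | cast i =>
      refine (hc.acyclic i).mono fun v ⟨hv, hvj⟩ => ?_
      have hvu : v ≠ u := by
        rintro rfl
        exact (Fin.castSucc_lt_last i).ne' (by simpa using hvj)
      have hvT := hv.resolve_left hvu
      exact ⟨hvT, Fin.castSucc_injective _ (hval v hvT ▸ hvj)⟩
  · induction p using Fin.lastCases with
    | last =>
      induction q using Fin.lastCases with
      | last => exact absurd rfl hpq
      | cast j =>
        obtain ⟨w, ⟨hw, rfl⟩, huw⟩ := (harcs j).1
        exact ⟨u, .inl rfl, w, .inr hw, huw, update_self _ _ _, hval w hw⟩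
    | cast i =>
      induction q using Fin.lastCases with
      | last =>
        obtain ⟨z, ⟨hz, rfl⟩, hzu⟩ := (harcs i).2
        exact ⟨z, .inr hz, u, .inl rfl, hzu, hval z hz, update_self _ _ _⟩
      | cast j =>
        obtain ⟨x, hx, y, hy, hxy, rfl, rfl⟩ := hc.complete i j (ne_of_apply_ne _ hpq)
        exact ⟨x, .inr hx, y, .inr hy, hxy, hval x hx, hval y hy⟩

theorem exists_insert (hc : IsCompleteAcyclicColoringOn A T c) (hu : u ∉ T) (huu : ¬ A u u) :
    ∃ m' ≥ m, ∃ c' : V → Fin m', IsCompleteAcyclicColoringOn A (insert u T) c' := by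
  classical
  by_cases hi : ∃ i, AcyclicSet A (insert u {v ∈ T | c v = i})
  · obtain ⟨i, hi⟩ := hi
    exact ⟨m, le_rfl, _, hc.update hu hi⟩
  · exact ⟨m + 1, m.le_succ, _, hc.update_last hu huu fun i =>
      (hc.acyclic i).exists_arcs_of_not_insert huu (not_exists.mp hi i)⟩

theorem exists_univ [Finite V] (hirr : ∀ v, ¬ A v v) (hc : IsCompleteAcyclicColoringOn A T c) :
    ∃ m' ≥ m, ∃ c' : V → Fin m', IsCompleteAcyclicColoringOn A Set.univ c' := by
  obtain ⟨T', -, hT'⟩ := Finite.exists_le_maximal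
    (p := fun T' => ∃ m' ≥ m, ∃ c' : V → Fin m', IsCompleteAcyclicColoringOn A T' c')
    ⟨m, le_rfl, c, hc⟩
  obtain ⟨m', hm', c', hc'⟩ := hT'.prop
  suffices T' = Set.univ from this ▸ ⟨m', hm', c', hc'⟩
  refine Set.eq_univ_of_forall fun u => by_contra fun hu => hu ?_
  obtain ⟨m'', hm'', c'', hc''⟩ := hc'.exists_insert hu (hirr u)
  exact hT'.2 ⟨m'', hm'.trans hm'', c'', hc''⟩ (Set.subset_insert u T') (Set.mem_insert u T')

theorem le_dac [Finite V] (hc : IsCompleteAcyclicColoringOn A Set.univ c) : m ≤ dac A := by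
  have hsurj : Surjective c := fun i => (hc.surjOn i).imp fun _ => And.right
  refine le_csSup ⟨Nat.card V, fun k ⟨c', hc', _⟩ => ?_⟩
    ⟨c, ⟨hsurj, fun i => ?_⟩, hsurj, fun i j hij => ?_⟩
  · simpa using Nat.card_le_card_of_surjective c' hc'.1
  · simpa using hc.acyclic i
  · obtain ⟨x, -, y, -, h⟩ := hc.complete i j hij
    exact ⟨x, y, h⟩

end IsCompleteAcyclicColoringOn

end

/-- For every induced subdigraph `H` of a digraph `D`, `dac(H) ≤ dac(D)`. -/
theorem stmt5 {V : Type*} [Fintype V] (A : V → V → Prop)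
    (hirr : ∀ v : V, ¬ A v v) (S : Set V) :
    dac (fun x y : S => A x.1 y.1) ≤ dac A := by
  refine csSup_le' fun k ⟨c₀, hac, hco⟩ => ?_
  rcases k.eq_zero_or_pos with rfl | hk
  · exact Nat.zero_le _
  obtain ⟨m, hkm, c, hc⟩ :=
    (IsCompleteAcyclicColoringOn.of_induced hac hco ⟨0, hk⟩).exists_univ hirr
  exact hkm.trans hc.le_dac
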